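/- Let p be an odd prime, q = p^s, F = GF(q). In the code of the Type I-B graph G(p,s) over GF(p), the vector taking value 1 at r, at v_0, and at each (0,j) with j ∈ F \ {0}; value −1 at v_{−1} and at each (y,y) with y ∈ F \ {0}; and value 0 elsewhere, is a codeword of Hamming weight 2q + 1. Consequently the minimum distance d_min of this p-ary code satisfies q + 1 ≤ d_min ≤ 2q + 1. -/

import Mathlib

open scoped Classical

namespace TypeIB

/-- The nonzero elements of `F`. -/
abbrev Fstar (F : Type*) [Field F] := {j : F // j ≠ 0}

/-- Variable nodes of the Type I-B graph: the root `r`, the nodes `v_y` (y ∈ F) and the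
nodes `(i,j)` with `i ∈ F`, `j ∈ F \ {0}`. -/
abbrev VN (F : Type*) [Field F] := Unit ⊕ (F ⊕ (F × Fstar F))

/-- Constraint nodes of the Type I-B graph: the root `r'`, the nodes `c_i` (i ∈ F) and the
nodes `(i,j)'` with `i ∈ F`, `j ∈ F \ {0}`. -/
abbrev CN (F : Type*) [Field F] := Unit ⊕ (F ⊕ (F × Fstar F))

/-- Adjacency of the Type I-B graph `G(p,s)`:
`r ~ c_i` for every `i`; `c_i ~ (i,j)` for every `j ≠ 0`; `r' ~ v_y` for every `y`;
`v_y ~ (y,j)'` for every `j ≠ 0`; and `(i,j) ~ (k, j + i·k)'` whenever `j + i·k ≠ 0`,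
except that the edges `(0,j) ~ (0,j)'` are omitted. -/
def adj (F : Type*) [Field F] : VN F → CN F → Prop
  | Sum.inl _, Sum.inl _ => False
  | Sum.inl _, Sum.inr (Sum.inl _) => True              -- r ~ c_i
  | Sum.inl _, Sum.inr (Sum.inr _) => False
  | Sum.inr (Sum.inl _), Sum.inl _ => True              -- v_y ~ r'
  | Sum.inr (Sum.inl _), Sum.inr (Sum.inl _) => False
  | Sum.inr (Sum.inl y), Sum.inr (Sum.inr (a, _)) => a = y   -- v_y ~ (y,b)'
  | Sum.inr (Sum.inr _), Sum.inl _ => False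
  | Sum.inr (Sum.inr (i, _)), Sum.inr (Sum.inl k) => k = i   -- c_i ~ (i,j)
  | Sum.inr (Sum.inr (i, j)), Sum.inr (Sum.inr (a, b)) =>
      (b : F) = (j : F) + i * a ∧ ¬(i = 0 ∧ a = 0)

end TypeIB

/-- Hamming weight of a vector: the number of nonzero coordinates. -/
noncomputable def hamWt {V K : Type*} [Zero K] (x : V → K) : ℕ :=
  Nat.card {v : V // x v ≠ 0}

namespace TypeIB

/-- The code of the Type I-B graph over `K`: vectors indexed by the variable nodes whose sum
over the neighbourhood of each constraint node vanishes. -/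
def InCode (F : Type*) [Field F] [Fintype F] (K : Type*) [AddCommMonoid K]
    (x : VN F → K) : Prop :=
  ∀ c : CN F, (∑ v : VN F, if adj F v c then x v else 0) = 0

/-- The minimum distance of the code of the Type I-B graph over `K`: the least Hamming
weight of a nonzero codeword. -/
noncomputable def dmin (F : Type*) [Field F] [Fintype F]
    (K : Type*) [AddCommMonoid K] : ℕ :=
  sInf {w | ∃ x : VN F → K, InCode F K x ∧ x ≠ 0 ∧ hamWt x = w}

end TypeIB

/-- The vector over GF(p) taking value 1 at `r`, at `v_0` and at each `(0,j)`; value −1 at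
`v_{−1}` and at each `(y,y)` with `y ≠ 0`; and value 0 elsewhere. -/
noncomputable def cw (p : ℕ) (F : Type*) [Field F] : TypeIB.VN F → ZMod p
  | Sum.inl _ => 1
  | Sum.inr (Sum.inl y) => if y = 0 then 1 else if y = -1 then -1 else 0
  | Sum.inr (Sum.inr (i, j)) => if i = 0 then 1 else if i = (j : F) then -1 else 0

/-!
Read the line node `(i,j)` as the line `b = j + i·a` and the constraint node `(a,b)'` as the
point `(a,b)`: then `c_k` gathers the lines of slope `k`, and `v_y` is tied to the points of
abscissa `y`.

`cw` is a codeword because a point `(a,b)'` lies on the line `(0,b)` unless `a = 0` and on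
exactly one diagonal line `(c,c)` unless `a = -1`, which cancels `cw (v_a)`; at `c_0` the
`q - 1 ≡ -1` lines `(0,j)` cancel `cw r`.

For `q + 1 ≤ d_min`, a nonzero codeword is nonzero at `r`, at some `v_a`, or only on lines. At
`r`, every `c_k` forces a nonzero line of slope `k`. At `v_a`, the check `r'` forces a second
nonzero `v_y`, and each of the `q - 1` points `(a,b)'` forces a nonzero line through it, distinct
for distinct `b`. Otherwise take a nonzero line `ℓ = (i,j)`: `c_i` forces a nonzero line parallel
to `ℓ`, and each of the `q - 1` points of `ℓ` forces another nonzero line through it; these are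
pairwise distinct since two lines meet at most once.
-/

open Finset Function

section HammingWeight

variable {V K : Type*} [Zero K]

lemma hamWt_eq_card_filter [Fintype V] (x : V → K) : hamWt x = #{v | x v ≠ 0} := by
  rw [hamWt, Nat.card_eq_fintype_card, Fintype.card_subtype]

lemma hamWt_eq_card [Fintype V] {x : V → K} (s : Finset V) (hs : ∀ v, x v ≠ 0 ↔ v ∈ s) :
    hamWt x = #s := by
  rw [hamWt_eq_card_filter]
  congr 1
  ext v
  simp [hs]

lemma hamWt_sum {α β : Type*} [Fintype α] [Fintype β] (x : α ⊕ β → K) :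
    hamWt x = hamWt (x ∘ Sum.inl) + hamWt (x ∘ Sum.inr) := by
  simp only [hamWt_eq_card_filter, card_filter, Fintype.sum_sum_type, comp_apply]

lemma hamWt_prod {α β : Type*} [Fintype α] [Fintype β] (x : α × β → K) :
    hamWt x = ∑ a, hamWt (fun b ↦ x (a, b)) := by
  simp only [hamWt_eq_card_filter, card_filter, Fintype.sum_prod_type]

lemma card_le_hamWt [Finite V] {ι : Type*} [Fintype ι] {x : V → K} (f : ι ↪ V)
    (hf : ∀ i, x (f i) ≠ 0) : Fintype.card ι ≤ hamWt x := by
  rw [← Nat.card_eq_fintype_card]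
  exact Nat.card_le_card_of_injective (fun i ↦ ⟨f i, hf i⟩)
    fun i j h ↦ f.injective (congrArg Subtype.val h)

end HammingWeight

section Sums

variable {ι M : Type*} [AddCommMonoid M] {f : ι → M}

lemma exists_ne_zero_of_add_sum_eq_zero {s : Finset ι} {a : M} (h : a + ∑ i ∈ s, f i = 0)
    (ha : a ≠ 0) : ∃ i ∈ s, f i ≠ 0 := by
  by_contra! hf
  rw [sum_eq_zero hf, add_zero] at h
  exact ha h

lemma exists_ne_ne_zero_of_sum_eq_zero [Fintype ι] [DecidableEq ι] (h : ∑ i, f i = 0) {i₀ : ι}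
    (h₀ : f i₀ ≠ 0) : ∃ i ≠ i₀, f i ≠ 0 := by
  rw [← add_sum_erase _ _ (mem_univ i₀)] at h
  obtain ⟨i, hi, hfi⟩ := exists_ne_zero_of_add_sum_eq_zero h h₀
  exact ⟨i, ne_of_mem_erase hi, hfi⟩

end Sums

lemma Fintype.card_subtype_ne {α : Type*} [Fintype α] [DecidableEq α] (e : α) :
    Fintype.card {a // a ≠ e} = Fintype.card α - 1 := by
  rw [Fintype.card_subtype_compl, Fintype.card_subtype_eq]

namespace TypeIB

section Constraints

variable {F : Type*} [Field F]

abbrev rootNode : VN F := Sum.inl ()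

abbrev vNode (y : F) : VN F := Sum.inr (Sum.inl y)

abbrev lineNode (z : F × Fstar F) : VN F := Sum.inr (Sum.inr z)

lemma lineNode_injective : Injective (lineNode (F := F)) :=
  Sum.inr_injective.comp Sum.inr_injective

variable [Fintype F] {K : Type*} [AddCommMonoid K]

theorem inCode_iff (x : VN F → K) : InCode F K x ↔
    (∑ y, x (vNode y) = 0) ∧
    (∀ k, x rootNode + ∑ j, x (lineNode (k, j)) = 0) ∧
    (∀ a (b : Fstar F), x (vNode a) + ∑ z : F × Fstar F,
      (if (b : F) = z.2 + z.1 * a ∧ ¬(z.1 = 0 ∧ a = 0) then x (lineNode z) else 0) = 0) := by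
  have hC (k : F) : (∑ v, if adj F v (Sum.inr (Sum.inl k)) then x v else 0) =
      x rootNode + ∑ j, x (lineNode (k, j)) := by
    simp only [Fintype.sum_sum_type, Fintype.sum_prod_type, adj, reduceIte, sum_const_zero,
      zero_add, Fintype.sum_unique]
    rw [Fintype.sum_eq_single k fun i hi ↦ by simp [Ne.symm hi]]
    simp
  have hP (a : F) (b : Fstar F) : (∑ v, if adj F v (Sum.inr (Sum.inr (a, b))) then x v else 0) =
      x (vNode a) + ∑ z : F × Fstar F,
        (if (b : F) = z.2 + z.1 * a ∧ ¬(z.1 = 0 ∧ a = 0) then x (lineNode z) else 0) := by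
    rw [Fintype.sum_sum_type, Fintype.sum_sum_type,
      Fintype.sum_eq_single a fun y hy ↦ by simp [adj, Ne.symm hy]]
    simp [adj]
  simp only [InCode, Sum.forall, Prod.forall, hC, hP]
  simp [Fintype.sum_sum_type, adj]

lemma card_Fstar_add_one : Fintype.card (Fstar F) + 1 = Fintype.card F := by
  have := Fintype.card_pos (α := F)
  rw [Fintype.card_subtype_ne]
  omega

end Constraints

section LowerBound

variable {F : Type*} [Field F]

lemma eq_of_two_common_points {i i' j j' a₁ a₂ : F} (ha : a₁ ≠ a₂)
    (h₁ : j + i * a₁ = j' + i' * a₁) (h₂ : j + i * a₂ = j' + i' * a₂) : i = i' ∧ j = j' := by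
  have hi : i = i' := by
    have : (i - i') * (a₁ - a₂) = 0 := by linear_combination h₁ - h₂
    exact sub_eq_zero.1 ((mul_eq_zero.1 this).resolve_right (sub_ne_zero.2 ha))
  subst hi
  exact ⟨rfl, add_right_cancel h₁⟩

/-- For `i = 0` the excluded abscissa is `-j / 0 = 0`, i.e. the omitted edge `(0,j) ~ (0,j)'`. -/
lemma incident_of_ne_neg_div {i a : F} {j : Fstar F} (ha : a ≠ -j / i) :
    (j : F) + i * a ≠ 0 ∧ ¬(i = 0 ∧ a = 0) := by
  by_cases hi : i = 0
  · simp_all [j.2]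
  · refine ⟨fun h ↦ ha ?_, fun h ↦ hi h.1⟩
    field_simp
    linear_combination h

variable [Fintype F] {K : Type*} [AddCommMonoid K] {x : VN F → K}

lemma card_add_one_le_hamWt_of_rootNode_ne_zero (hx : InCode F K x) (hr : x rootNode ≠ 0) :
    Fintype.card F + 1 ≤ hamWt x := by
  obtain ⟨-, hC, -⟩ := (inCode_iff x).1 hx
  have hcol (k : F) : ∃ j, x (lineNode (k, j)) ≠ 0 := by
    obtain ⟨j, -, hj⟩ := exists_ne_zero_of_add_sum_eq_zero (hC k) hr
    exact ⟨j, hj⟩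
  choose g hg using hcol
  let f : F ↪ VN F :=
    ⟨fun k ↦ lineNode (k, g k), fun k₁ k₂ h ↦ congrArg Prod.fst (lineNode_injective h)⟩
  have := card_le_hamWt (f.optionElim rootNode (by rintro ⟨k, h⟩; cases h))
    (by rintro (_ | k); exacts [hr, hg k])
  simpa using this

lemma card_add_one_le_hamWt_of_vNode_ne_zero (hx : InCode F K x) {a : F}
    (ha : x (vNode a) ≠ 0) : Fintype.card F + 1 ≤ hamWt x := by
  obtain ⟨hR, -, hP⟩ := (inCode_iff x).1 hx
  obtain ⟨y, hya, hy⟩ := exists_ne_ne_zero_of_sum_eq_zero hR ha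
  have hpt (b : Fstar F) : ∃ z : F × Fstar F, (b : F) = z.2 + z.1 * a ∧ x (lineNode z) ≠ 0 := by
    obtain ⟨z, -, hz⟩ := exists_ne_zero_of_add_sum_eq_zero (hP a b) ha
    exact ⟨z, (ite_ne_right_iff.1 hz).1.1, (ite_ne_right_iff.1 hz).2⟩
  choose g hgb hg using hpt
  let f : Fstar F ↪ VN F :=
    ⟨lineNode ∘ g, fun b₁ b₂ h ↦ Subtype.ext <| by rw [hgb b₁, hgb b₂, lineNode_injective h]⟩
  let f₁ := f.optionElim (vNode y) (by rintro ⟨b, h⟩; cases h)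
  let f₂ := f₁.optionElim (vNode a) (by
    rintro ⟨(_ | b), h⟩
    exacts [hya (Sum.inl_injective (Sum.inr_injective h)), nomatch h])
  have := card_le_hamWt f₂ (by rintro (_ | _ | b); exacts [ha, hy, hg b])
  rw [Fintype.card_option, Fintype.card_option, card_Fstar_add_one] at this
  omega

lemma card_add_one_le_hamWt_of_lineNode_ne_zero (hx : InCode F K x) (hr : x rootNode = 0)
    (hv : ∀ y, x (vNode y) = 0) {i : F} {j : Fstar F} (hij : x (lineNode (i, j)) ≠ 0) :
    Fintype.card F + 1 ≤ hamWt x := by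
  obtain ⟨-, hC, hP⟩ := (inCode_iff x).1 hx
  obtain ⟨j', hj', hxj'⟩ : ∃ j' ≠ j, x (lineNode (i, j')) ≠ 0 := by
    have h := hC i
    rw [hr, zero_add] at h
    exact exists_ne_ne_zero_of_sum_eq_zero h hij
  have hpt (a : {a : F // a ≠ -j / i}) :
      ∃ z ≠ (i, j), (j : F) + i * a = z.2 + z.1 * a ∧ x (lineNode z) ≠ 0 := by
    obtain ⟨hb, hia⟩ := incident_of_ne_neg_div a.2
    have h := hP a ⟨_, hb⟩
    rw [hv, zero_add] at h
    obtain ⟨z, hz, hxz⟩ := exists_ne_ne_zero_of_sum_eq_zero h (i₀ := (i, j)) (by simpa [hia])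
    exact ⟨z, hz, (ite_ne_right_iff.1 hxz).1.1, (ite_ne_right_iff.1 hxz).2⟩
  choose g hg hga hgx using hpt
  have hg_inj : Injective g := by
    intro a₁ a₂ h
    by_contra hne
    obtain ⟨h₁, h₂⟩ := eq_of_two_common_points (Subtype.coe_ne_coe.2 hne) (hga a₁) (h ▸ hga a₂)
    exact hg a₁ (Prod.ext h₁.symm (Subtype.ext h₂.symm))
  have hg_par (a) : g a ≠ (i, j') := by
    intro h
    have := hga a
    rw [h] at this
    exact hj' (Subtype.ext (add_right_cancel this).symm)
  let f : {a : F // a ≠ -j / i} ↪ VN F := ⟨lineNode ∘ g, lineNode_injective.comp hg_inj⟩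
  let f₁ := f.optionElim (lineNode (i, j')) (by
    rintro ⟨a, h⟩
    exact hg_par a (lineNode_injective h))
  let f₂ := f₁.optionElim (lineNode (i, j)) (by
    rintro ⟨(_ | a), h⟩
    exacts [hj' (congrArg Prod.snd (lineNode_injective h)), hg a (lineNode_injective h)])
  have := card_le_hamWt f₂ (by rintro (_ | _ | a); exacts [hij, hxj', hgx a])
  rw [Fintype.card_option, Fintype.card_option, Fintype.card_subtype_ne] at this
  have := Fintype.card_pos (α := F)
  omega

theorem card_add_one_le_hamWt (hx : InCode F K x) (hne : x ≠ 0) :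
    Fintype.card F + 1 ≤ hamWt x := by
  by_cases hr : x rootNode = 0
  swap
  · exact card_add_one_le_hamWt_of_rootNode_ne_zero hx hr
  by_cases hv : ∀ y, x (vNode y) = 0
  swap
  · obtain ⟨a, ha⟩ := not_forall.1 hv
    exact card_add_one_le_hamWt_of_vNode_ne_zero hx ha
  obtain ⟨⟨i, j⟩, hz⟩ : ∃ z, x (lineNode z) ≠ 0 := by
    by_contra! h
    exact hne (funext fun | .inl () => hr | .inr (.inl y) => hv y | .inr (.inr z) => h z)
  exact card_add_one_le_hamWt_of_lineNode_ne_zero hx hr hv hz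

theorem card_add_one_le_dmin (h : ∃ x : VN F → K, InCode F K x ∧ x ≠ 0) :
    Fintype.card F + 1 ≤ dmin F K := by
  obtain ⟨x, hx, hne⟩ := h
  refine le_csInf ⟨_, x, hx, hne, rfl⟩ ?_
  rintro _ ⟨y, hy, hyne, rfl⟩
  exact card_add_one_le_hamWt hy hyne

end LowerBound

section Codeword

variable (p : ℕ) {F : Type*} [Field F]

lemma eq_of_incident_of_cw_ne_zero {a : F} {b : Fstar F} {z : F × Fstar F}
    (hz : (b : F) = z.2 + z.1 * a ∧ ¬(z.1 = 0 ∧ a = 0)) (hcw : cw p F (lineNode z) ≠ 0) :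
    (z = (0, b) ∧ a ≠ 0) ∨ (z.1 = z.2 ∧ (z.2 : F) * (1 + a) = b) := by
  obtain ⟨i, j⟩ := z
  obtain ⟨hb, hia⟩ := hz
  by_cases hi : i = 0
  · subst hi
    refine .inl ⟨Prod.ext rfl (Subtype.ext ?_), fun ha ↦ hia ⟨rfl, ha⟩⟩
    simpa using hb.symm
  · have hij : i = j := by
      by_contra h
      simp [cw, hi, h] at hcw
    exact .inr ⟨hij, by rw [hb, ← hij]; ring⟩

variable [Fintype F]

lemma sum_cw_vNode : ∑ y, cw p F (vNode y) = 0 := by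
  have h : (0 : F) ≠ -1 := (neg_ne_zero.2 one_ne_zero).symm
  rw [Fintype.sum_eq_add 0 (-1) h fun y hy ↦ by simp [cw, hy.1, hy.2]]
  simp [cw, h.symm]

lemma cw_rootNode_add_sum_lineNode (hq : (Fintype.card F : ZMod p) = 0) (k : F) :
    cw p F rootNode + ∑ j, cw p F (lineNode (k, j)) = 0 := by
  by_cases hk : k = 0
  · simp only [cw, hk, reduceIte, sum_const, card_univ, nsmul_eq_mul, mul_one]
    rw [add_comm, ← Nat.cast_add_one, card_Fstar_add_one, hq]
  · rw [Fintype.sum_eq_single ⟨k, hk⟩ fun j hj ↦ ?_]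
    · simp [cw, hk]
    · have : k ≠ j := fun h ↦ hj (Subtype.ext h.symm)
      simp [cw, hk, this]

lemma cw_vNode_add_sum_incident (a : F) (b : Fstar F) :
    cw p F (vNode a) + ∑ z : F × Fstar F,
      (if (b : F) = z.2 + z.1 * a ∧ ¬(z.1 = 0 ∧ a = 0) then cw p F (lineNode z) else 0) = 0 := by
  have hsupp (z : F × Fstar F)
      (hz : (if (b : F) = z.2 + z.1 * a ∧ ¬(z.1 = 0 ∧ a = 0) then cw p F (lineNode z) else 0) ≠ 0) :
      (z = (0, b) ∧ a ≠ 0) ∨ (z.1 = z.2 ∧ (z.2 : F) * (1 + a) = b) :=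
    eq_of_incident_of_cw_ne_zero p (ite_ne_right_iff.1 hz).1 (ite_ne_right_iff.1 hz).2
  rcases eq_or_ne a 0 with ha0 | ha0
  · rw [Fintype.sum_eq_single ((b : F), b) fun z hz ↦ by_contra fun hfz ↦ ?_]
    · simp [cw, ha0, b.2]
    · rcases hsupp z hfz with h | ⟨h₁, h₂⟩
      · exact h.2 ha0
      · rw [ha0, add_zero, mul_one] at h₂
        exact hz (Prod.ext (h₁.trans h₂) (Subtype.ext h₂))
  rcases eq_or_ne a (-1) with ha1 | ha1
  · rw [Fintype.sum_eq_single (0, b) fun z hz ↦ by_contra fun hfz ↦ ?_]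
    · simp [cw, ha1]
    · rcases hsupp z hfz with h | ⟨h₁, h₂⟩
      · exact hz h.1
      · rw [ha1, add_neg_cancel, mul_zero] at h₂
        exact b.2 h₂.symm
  · have h1a : 1 + a ≠ 0 := fun h ↦ ha1 (eq_neg_of_add_eq_zero_right h)
    set c : Fstar F := ⟨b / (1 + a), div_ne_zero b.2 h1a⟩
    have hbc : (b : F) = c + c * a := by
      simp only [c]
      field_simp
    have hne : ((0 : F), b) ≠ ((c : F), c) := fun h ↦ c.2 (congrArg Prod.fst h).symm
    rw [Fintype.sum_eq_add _ _ hne fun z hz ↦ by_contra fun hfz ↦ ?_]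
    · rw [if_pos (c := (b : F) = c + c * a ∧ ¬((c : F) = 0 ∧ a = 0)) ⟨hbc, fun h ↦ c.2 h.1⟩]
      simp [cw, ha0, ha1, c.2]
    · rcases hsupp z hfz with h | ⟨h₁, h₂⟩
      · exact hz.1 h.1
      · refine hz.2 (Prod.ext (h₁.trans ?_) (Subtype.ext ?_)) <;>
          simp only [c] <;> field_simp <;> exact h₂

theorem cw_inCode (hq : (Fintype.card F : ZMod p) = 0) : InCode F (ZMod p) (cw p F) :=
  (inCode_iff _).2
    ⟨sum_cw_vNode p, cw_rootNode_add_sum_lineNode p hq, cw_vNode_add_sum_incident p⟩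

theorem hamWt_cw [Nontrivial (ZMod p)] : hamWt (cw p F) = 2 * Fintype.card F + 1 := by
  have h01 : (0 : F) ≠ -1 := (neg_ne_zero.2 one_ne_zero).symm
  have hroot : hamWt (cw p F ∘ Sum.inl) = 1 := hamWt_eq_card univ fun _ ↦ by simp [cw]
  have hv : hamWt ((cw p F ∘ Sum.inr) ∘ Sum.inl) = 2 := by
    rw [hamWt_eq_card {0, -1} fun y ↦ ?_, card_pair h01]
    by_cases hy : y = 0 <;> simp [cw, hy]
  have hline (i : F) : hamWt (fun j ↦ ((cw p F ∘ Sum.inr) ∘ Sum.inr) (i, j)) =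
      if i = 0 then Fintype.card F - 1 else 1 := by
    split_ifs with hi
    · rw [hamWt_eq_card univ fun j ↦ by simp [cw, hi], card_univ, Fintype.card_subtype_ne]
    · rw [hamWt_eq_card {⟨i, hi⟩} fun j ↦ ?_, card_singleton]
      simp [cw, hi, Subtype.ext_iff, eq_comm]
  simp only [hamWt_sum, hamWt_prod, hroot, hv, hline]
  rw [← add_sum_erase _ _ (mem_univ 0), if_pos rfl,
    sum_congr rfl fun i hi ↦ if_neg (ne_of_mem_erase hi), sum_const,
    card_erase_of_mem (mem_univ _), card_univ, smul_eq_mul, mul_one]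
  have := Fintype.card_pos (α := F)
  omega

end Codeword

end TypeIB

theorem stmt_7_general (p s : ℕ) (hp : p.Prime) (hs : 0 < s)
    (F : Type*) [Field F] [Fintype F] (hF : Fintype.card F = p ^ s) :
    -- the given vector is a codeword of the p-ary code of G(p,s)
    TypeIB.InCode F (ZMod p) (cw p F) ∧
    -- of Hamming weight 2q + 1
    hamWt (cw p F) = 2 * p ^ s + 1 ∧
    -- consequently q + 1 ≤ d_min ≤ 2q + 1
    p ^ s + 1 ≤ TypeIB.dmin F (ZMod p) ∧
    TypeIB.dmin F (ZMod p) ≤ 2 * p ^ s + 1 := by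
  have : Fact p.Prime := ⟨hp⟩
  have hq : (Fintype.card F : ZMod p) = 0 := by
    rw [hF, Nat.cast_pow, ZMod.natCast_self, zero_pow hs.ne']
  have hcode := TypeIB.cw_inCode p hq
  have hwt : hamWt (cw p F) = 2 * p ^ s + 1 := by rw [TypeIB.hamWt_cw, hF]
  have hne : cw p F ≠ 0 := fun h ↦ by simp [h, hamWt] at hwt
  refine ⟨hcode, hwt, hF ▸ TypeIB.card_add_one_le_dmin ⟨_, hcode, hne⟩, ?_⟩
  exact hwt ▸ Nat.sInf_le ⟨_, hcode, hne, rfl⟩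

theorem stmt_7 (p s : ℕ) (hp : p.Prime) (hodd : p ≠ 2) (hs : 0 < s)
    (F : Type*) [Field F] [Fintype F] (hF : Fintype.card F = p ^ s) :
    -- the given vector is a codeword of the p-ary code of G(p,s)
    TypeIB.InCode F (ZMod p) (cw p F) ∧
    -- of Hamming weight 2q + 1
    hamWt (cw p F) = 2 * p ^ s + 1 ∧
    -- consequently q + 1 ≤ d_min ≤ 2q + 1
    p ^ s + 1 ≤ TypeIB.dmin F (ZMod p) ∧
    TypeIB.dmin F (ZMod p) ≤ 2 * p ^ s + 1 :=
  stmt_7_general p s hp hs F hF
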